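/- With the notation of the previous statement (A = U + 2U*, M = diag(α_n), N = diag(β_n), α_n = (1+4^{−n})^{−1/2}, β_n = 2^{−n}(1+4^{−n})^{−1/2}), the operator M A N − N A* M is skew-adjoint and injective with dense range; i.e., it is a quasiaffinity. -/

import Mathlib

open ContinuousLinearMap

/-!
Write `M = diag(μₙ)`, so that `N = diag(2⁻ⁿ μₙ)`, and `T = M A N - N A* M`. Since `M` and `N` are
self-adjoint, `T = X - X*` with `X = M A N`, so `T` is skew-adjoint. On the basis it is a weighted
bilateral shift, `T eₙ = cₙ₊₁ eₙ₊₁ - cₙ eₙ₋₁` with `cₙ = 3 · 2⁻ⁿ μₙ₋₁ μₙ`. If `T x = 0`, skewness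
gives `⟪T eₘ, x⟫ = 0`, i.e. `cₘ₊₁ aₘ₊₁ = cₘ aₘ₋₁` for `aₘ = ⟪eₘ, x⟫`; after cancelling this reads
`μₘ₊₂ aₘ₊₂ = 2 μₘ aₘ`. The sequence `μₘ aₘ` is bounded by `‖M‖ ‖x‖`, so it cannot double along
every step of size two unless it vanishes, whence `x = 0`. Finally, a skew-adjoint operator is
normal, so its range is orthogonal to its kernel, and injectivity gives dense range.
-/

theorem eq_zero_of_forall_add_eq_smul_of_norm_le {ι 𝕜 E : Type*} [AddMonoid ι] [NormedField 𝕜]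
    [NormedAddCommGroup E] [NormedSpace 𝕜 E] {f : ι → E} {p : ι} {r : 𝕜} {C : ℝ}
    (hr : 1 < ‖r‖) (hf : ∀ i, f (i + p) = r • f i) (hC : ∀ i, ‖f i‖ ≤ C) (i : ι) : f i = 0 := by
  have hpow : ∀ k : ℕ, f (i + k • p) = r ^ k • f i := by
    intro k
    induction k with
    | zero => simp
    | succ k ih => rw [succ_nsmul, ← add_assoc, hf, ih, pow_succ', mul_smul]
  by_contra hi
  have hpos : 0 < ‖f i‖ := norm_pos_iff.mpr hi
  obtain ⟨k, hk⟩ := pow_unbounded_of_one_lt (C / ‖f i‖) hr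
  have hle : ‖r‖ ^ k * ‖f i‖ ≤ C := by
    simpa only [hpow, norm_smul, norm_pow] using hC (i + k • p)
  rw [div_lt_iff₀ hpos] at hk
  linarith

theorem mul_mul_sub_mul_star_mul_mem_skewAdjoint {R : Type*} [Ring R] [StarRing R] {M N : R}
    (hM : IsSelfAdjoint M) (hN : IsSelfAdjoint N) (A : R) :
    M * A * N - N * star A * M ∈ skewAdjoint R := by
  rw [skewAdjoint.mem_iff, star_sub, star_mul, star_mul, star_mul, star_mul, star_star,
    hM.star_eq, hN.star_eq, neg_sub, mul_assoc, mul_assoc]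

theorem ContinuousLinearMap.IsStarNormal.denseRange_of_injective {𝕜 E : Type*} [RCLike 𝕜]
    [NormedAddCommGroup E] [InnerProductSpace 𝕜 E] [CompleteSpace E] {T : E →L[𝕜] E}
    (hT : IsStarNormal T) (hinj : Function.Injective T) : DenseRange T := by
  have hrange : T.range.topologicalClosure = ⊤ := by
    rw [Submodule.topologicalClosure_eq_top_iff, hT.orthogonal_range]
    exact LinearMap.ker_eq_bot.mpr hinj
  simpa only [DenseRange, LinearMap.coe_range, coe_coe] using
    Submodule.dense_iff_topologicalClosure_eq_top.mpr hrange

namespace HilbertBasis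

variable {ι 𝕜 E : Type*} [RCLike 𝕜] [NormedAddCommGroup E] [InnerProductSpace 𝕜 E]
  (b : HilbertBasis ι 𝕜 E)

theorem ext_inner {x y : E} (h : ∀ i, inner 𝕜 (b i) x = inner 𝕜 (b i) y) : x = y :=
  b.repr.injective <| lp.ext <| funext fun i => by
    simp only [b.repr_apply_apply, h]

theorem continuousLinearMap_ext {F : Type*} [NormedAddCommGroup F] [NormedSpace 𝕜 F]
    {f g : E →L[𝕜] F} (h : ∀ i, f (b i) = g (b i)) : f = g :=
  ContinuousLinearMap.ext_on (Submodule.dense_iff_topologicalClosure_eq_top.mpr b.dense_span)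
    (by rintro _ ⟨i, rfl⟩; exact h i)

theorem norm_le_opNorm_of_apply_eq_smul {D : E →L[𝕜] E} {i : ι} {c : 𝕜}
    (hD : D (b i) = c • b i) : ‖c‖ ≤ ‖D‖ := by
  simpa [hD, norm_smul, b.orthonormal.1 i] using D.le_opNorm (b i)

variable [CompleteSpace E]

theorem isSelfAdjoint_of_apply_eq_ofReal_smul (d : ι → ℝ) {D : E →L[𝕜] E}
    (hD : ∀ i, D (b i) = (d i : 𝕜) • b i) : IsSelfAdjoint D := by
  classical
  refine b.continuousLinearMap_ext fun i => b.ext_inner fun j => ?_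
  rw [star_eq_adjoint, adjoint_inner_right, hD, hD, inner_smul_left, inner_smul_right,
    RCLike.conj_ofReal, orthonormal_iff_ite.mp b.orthonormal]
  split_ifs with hji
  · rw [hji]
  · simp

theorem adjoint_apply_of_apply_eq_equiv (σ : ι ≃ ι) {U : E →L[𝕜] E}
    (hU : ∀ i, U (b i) = b (σ i)) (i : ι) : adjoint U (b i) = b (σ.symm i) :=
  b.ext_inner fun j => by
    classical
    rw [adjoint_inner_right, hU, orthonormal_iff_ite.mp b.orthonormal,
      orthonormal_iff_ite.mp b.orthonormal]
    exact if_congr σ.eq_symm_apply.symm rfl rfl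

end HilbertBasis

def skewShiftCoeff (μ ν : ℤ → ℝ) (k : ℤ) : ℝ := 2 * μ k * ν (k - 1) - ν k * μ (k - 1)

theorem skewShiftCoeff_two_zpow_mul (μ : ℤ → ℝ) (k : ℤ) :
    skewShiftCoeff μ (fun j => 2 ^ (-j) * μ j) k = 3 * 2 ^ (-k) * (μ (k - 1) * μ k) := by
  rw [skewShiftCoeff, neg_sub, zpow_sub₀ two_ne_zero, zpow_neg, zpow_one]
  ring

theorem mul_eq_two_mul_of_skewShiftCoeff_mul_eq {μ : ℤ → ℝ} {a : ℤ → ℂ} {m : ℤ} (hμ : μ m ≠ 0)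
    (h : (skewShiftCoeff μ (fun j => 2 ^ (-j) * μ j) (m + 1) : ℂ) * a (m + 1) =
      skewShiftCoeff μ (fun j => 2 ^ (-j) * μ j) m * a (m - 1)) :
    μ (m + 1) * a (m + 1) = 2 * (μ (m - 1) * a (m - 1)) := by
  rw [skewShiftCoeff_two_zpow_mul, skewShiftCoeff_two_zpow_mul, add_sub_cancel_right,
    neg_add, zpow_add₀ two_ne_zero, zpow_neg_one] at h
  push_cast at h
  have h3 : (3 * 2 ^ (-m) * μ m : ℂ) ≠ 0 := by
    have : (2 : ℂ) ^ (-m) ≠ 0 := zpow_ne_zero _ two_ne_zero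
    exact mul_ne_zero (mul_ne_zero three_ne_zero this) (Complex.ofReal_ne_zero.mpr hμ)
  apply mul_left_cancel₀ h3
  linear_combination 2 * h

section BilateralShift

variable {H : Type*} [NormedAddCommGroup H] [InnerProductSpace ℂ H] [CompleteSpace H]
  (e : HilbertBasis ℤ ℂ H)

theorem apply_basis_mul_mul_sub_mul_adjoint_mul {U M N : H →L[ℂ] H} {μ ν : ℤ → ℝ}
    (hU : ∀ n, U (e n) = e (n - 1)) (hM : ∀ n, M (e n) = (μ n : ℂ) • e n)
    (hN : ∀ n, N (e n) = (ν n : ℂ) • e n) (n : ℤ) :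
    (M * (U + 2 • adjoint U) * N - N * adjoint (U + 2 • adjoint U) * M : H →L[ℂ] H) (e n) =
      (skewShiftCoeff μ ν (n + 1) : ℂ) • e (n + 1) - (skewShiftCoeff μ ν n : ℂ) • e (n - 1) := by
  have hU' : ∀ n, adjoint U (e n) = e (n + 1) := fun n => by
    simpa using e.adjoint_apply_of_apply_eq_equiv (Equiv.subRight 1) hU n
  simp only [map_add, map_nsmul, adjoint_adjoint, sub_apply, mul_apply_eq_comp, add_apply,
    smul_apply, hM, hN, hU, hU', map_smul, skewShiftCoeff, add_sub_cancel_right]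
  simp only [← Nat.cast_smul_eq_nsmul ℂ]
  push_cast
  module

theorem injective_of_apply_basis_eq_skewShiftCoeff {T : H →L[ℂ] H} {μ : ℤ → ℝ} {C : ℝ}
    (hμ : ∀ n, μ n ≠ 0) (hC : ∀ n, ‖μ n‖ ≤ C) (hT : adjoint T = -T)
    (hTe : ∀ n, T (e n) = (skewShiftCoeff μ (fun j => 2 ^ (-j) * μ j) (n + 1) : ℂ) • e (n + 1) -
      (skewShiftCoeff μ (fun j => 2 ^ (-j) * μ j) n : ℂ) • e (n - 1)) :
    Function.Injective T := by
  refine (injective_iff_map_eq_zero T).mpr fun x hx => ?_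
  set a : ℤ → ℂ := fun m => inner ℂ (e m) x
  have hrec : ∀ m, μ (m + 2) * a (m + 2) = 2 * (μ m * a m) := fun m => by
    have hm : inner ℂ (T (e (m + 1))) x = 0 := by
      rw [← neg_eq_zero, ← inner_neg_left, ← neg_apply, ← hT, adjoint_inner_left, hx,
        inner_zero_right]
    rw [hTe, inner_sub_left, inner_smul_left, inner_smul_left, Complex.conj_ofReal,
      Complex.conj_ofReal, sub_eq_zero] at hm
    simpa only [add_assoc, one_add_one_eq_two, add_sub_cancel_right] using
      mul_eq_two_mul_of_skewShiftCoeff_mul_eq (a := a) (hμ _) hm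
  have hbound : ∀ m, ‖(μ m : ℂ) * a m‖ ≤ C * ‖x‖ := fun m => by
    rw [norm_mul, Complex.norm_real]
    have ha : ‖a m‖ ≤ ‖x‖ := by
      simpa [e.orthonormal.1 m] using norm_inner_le_norm (𝕜 := ℂ) (e m) x
    exact mul_le_mul (hC m) ha (norm_nonneg _) ((norm_nonneg _).trans (hC m))
  have hzero := eq_zero_of_forall_add_eq_smul_of_norm_le (r := (2 : ℂ)) (by norm_num)
    (fun m => by simpa using hrec m) hbound
  exact e.ext_inner fun m => by
    simpa [hμ m, a] using hzero m

end BilateralShift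

theorem mul_mul_sub_mul_adjoint_mul_quasiaffinity {H : Type*} [NormedAddCommGroup H]
    [InnerProductSpace ℂ H] [CompleteSpace H] (e : HilbertBasis ℤ ℂ H) {U M N : H →L[ℂ] H}
    {μ : ℤ → ℝ} (hμ : ∀ n, μ n ≠ 0) (hU : ∀ n, U (e n) = e (n - 1))
    (hM : ∀ n, M (e n) = (μ n : ℂ) • e n)
    (hN : ∀ n, N (e n) = ((2 ^ (-n) * μ n : ℝ) : ℂ) • e n) :
    let T := M * (U + 2 • adjoint U) * N - N * adjoint (U + 2 • adjoint U) * M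
    adjoint T = -T ∧ Function.Injective T ∧ DenseRange T := by
  intro T
  have hskew : T ∈ skewAdjoint (H →L[ℂ] H) :=
    mul_mul_sub_mul_star_mul_mem_skewAdjoint (e.isSelfAdjoint_of_apply_eq_ofReal_smul _ hM)
      (e.isSelfAdjoint_of_apply_eq_ofReal_smul _ hN) _
  have hinj : Function.Injective T :=
    injective_of_apply_basis_eq_skewShiftCoeff e hμ
      (fun n => by simpa using e.norm_le_opNorm_of_apply_eq_smul (hM n))
      (skewAdjoint.mem_iff.mp hskew) (apply_basis_mul_mul_sub_mul_adjoint_mul e hU hM hN)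
  exact ⟨skewAdjoint.mem_iff.mp hskew, hinj,
    (skewAdjoint.isStarNormal_of_mem hskew).denseRange_of_injective hinj⟩

theorem MAN_sub_NAstarM_quasiaffinity (H : Type*) [NormedAddCommGroup H]
    [InnerProductSpace ℂ H] [CompleteSpace H]
    (e : HilbertBasis ℤ ℂ H) (U M N : H →L[ℂ] H)
    (hU : ∀ n : ℤ, U (e n) = e (n - 1))
    (hM : ∀ n : ℤ, M (e n) = ((1 / Real.sqrt (1 + (4 : ℝ) ^ (-n)) : ℝ) : ℂ) • e n)
    (hN : ∀ n : ℤ, N (e n) =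
      (((2 : ℝ) ^ (-n) / Real.sqrt (1 + (4 : ℝ) ^ (-n)) : ℝ) : ℂ) • e n) :
    adjoint (M * (U + 2 • adjoint U) * N - N * adjoint (U + 2 • adjoint U) * M) =
        -(M * (U + 2 • adjoint U) * N - N * adjoint (U + 2 • adjoint U) * M) ∧
      Function.Injective
        ⇑((M * (U + 2 • adjoint U) * N - N * adjoint (U + 2 • adjoint U) * M : H →L[ℂ] H)) ∧
      DenseRange
        ⇑((M * (U + 2 • adjoint U) * N - N * adjoint (U + 2 • adjoint U) * M : H →L[ℂ] H)) := by
  refine mul_mul_sub_mul_adjoint_mul_quasiaffinity e (fun n => ?_) hU hM fun n => ?_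
  · positivity
  · rw [hN, mul_one_div]
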